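/- arXiv:2402.02316 — 2 statements merged into one kernel-verified Lean document; each statement's English description precedes it below -/
import Mathlib

section
/- For any temperature β > 0 and any index y, the ℓ2 norm of the gradient of the softmax function x ↦ softmax(x/β)_y is at most 1/(2√2 β). -/
/-!
The gradient of `z ↦ softmax(z)_y` at `x` is `s_y (e_y - s)` with `s = softmax x` a probability
vector. The entries of `s` off `y` are nonnegative and sum to `1 - s_y`, so their squares sum to at
most `(1 - s_y)²`; hence the gradient has norm at most `√2 s_y (1 - s_y) ≤ √2 / 4 = 1 / (2√2)`. The
temperature only contributes the chain-rule factor `1 / β`.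
-/

open Real

/-- `softmax(x)_y = exp(x_y) / Σ_i exp(x_i)`. -/
noncomputable def softmax {K : ℕ} (x : EuclideanSpace ℝ (Fin K)) (y : Fin K) : ℝ :=
  Real.exp (x y) / ∑ i, Real.exp (x i)

theorem HasGradientAt.comp_const_smul {F : Type*} [NormedAddCommGroup F] [InnerProductSpace ℝ F]
    [CompleteSpace F] {f : F → ℝ} {f' x : F} (c : ℝ) (hf : HasGradientAt f f' (c • x)) :
    HasGradientAt (fun z => f (c • z)) (c • f') x := by
  rw [hasGradientAt_iff_hasFDerivAt] at hf ⊢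
  refine (hf.comp x (c • ContinuousLinearMap.id ℝ F).hasFDerivAt).congr_fderiv ?_
  ext v
  simp

namespace EuclideanSpace

variable {ι : Type*} [Fintype ι] [DecidableEq ι] {p : EuclideanSpace ℝ ι}

theorem sum_sq_le_sq_add_one_sub_sq (hp : ∀ i, 0 ≤ p i) (hsum : ∑ i, p i = 1) (y : ι) :
    ∑ i, p i ^ 2 ≤ p y ^ 2 + (1 - p y) ^ 2 := by
  have hrest : ∑ i ∈ Finset.univ.erase y, p i = 1 - p y := by
    rw [← hsum, ← Finset.sum_erase_add _ _ (Finset.mem_univ y), add_sub_cancel_right]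
  rw [← Finset.sum_erase_add _ _ (Finset.mem_univ y), add_comm, ← hrest]
  gcongr
  exact Finset.sum_sq_le_sq_sum_of_nonneg fun i _ => hp i

theorem norm_single_sub_sq_le (hp : ∀ i, 0 ≤ p i) (hsum : ∑ i, p i = 1) (y : ι) :
    ‖single y 1 - p‖ ^ 2 ≤ 2 * (1 - p y) ^ 2 := by
  rw [norm_sub_sq_real, EuclideanSpace.inner_single_left, EuclideanSpace.real_norm_sq_eq p]
  have := sum_sq_le_sq_add_one_sub_sq hp hsum y
  simp only [PiLp.norm_single, norm_one, one_pow, ringHom_apply, one_mul]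
  nlinarith

theorem norm_smul_single_sub_le (hp : ∀ i, 0 ≤ p i) (hsum : ∑ i, p i = 1) (y : ι) :
    ‖p y • (single y 1 - p)‖ ≤ 1 / (2 * √2) := by
  have hy : p y ≤ 1 := hsum ▸ Finset.single_le_sum (fun i _ => hp i) (Finset.mem_univ y)
  have hnorm : ‖single y 1 - p‖ ≤ √2 * (1 - p y) := by
    rw [← sqrt_sq (sub_nonneg.2 hy), ← sqrt_mul zero_le_two, ← sqrt_sq (norm_nonneg _)]
    exact sqrt_le_sqrt (norm_single_sub_sq_le hp hsum y)
  calc ‖p y • (single y 1 - p)‖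
      ≤ p y * (√2 * (1 - p y)) := by
        rw [norm_smul, Real.norm_of_nonneg (hp y)]
        exact mul_le_mul_of_nonneg_left hnorm (hp y)
    _ ≤ 1 / (2 * √2) := by
        rw [le_div_iff₀ (by positivity)]
        nlinarith [sq_nonneg (p y - 1 / 2), mul_self_sqrt (zero_le_two (α := ℝ))]

end EuclideanSpace

section Softmax

variable {K : ℕ} [NeZero K]

theorem sum_exp_pos (x : EuclideanSpace ℝ (Fin K)) : 0 < ∑ i, exp (x i) :=
  Finset.sum_pos (fun _ _ => exp_pos _) Finset.univ_nonempty

theorem softmax_nonneg (x : EuclideanSpace ℝ (Fin K)) (i : Fin K) : 0 ≤ softmax x i :=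
  div_nonneg (exp_pos _).le (sum_exp_pos x).le

theorem sum_softmax (x : EuclideanSpace ℝ (Fin K)) : ∑ i, softmax x i = 1 := by
  simp only [softmax, ← Finset.sum_div]
  exact div_self (sum_exp_pos x).ne'

theorem hasGradientAt_softmax (x : EuclideanSpace ℝ (Fin K)) (y : Fin K) :
    HasGradientAt (fun z => softmax z y)
      (softmax x y • (EuclideanSpace.single y 1 - WithLp.toLp 2 (softmax x))) x := by
  have hexp (i : Fin K) : HasFDerivAt (fun z : EuclideanSpace ℝ (Fin K) => exp (z i))
      (exp (x i) • EuclideanSpace.proj i) x :=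
    (EuclideanSpace.proj i).hasFDerivAt.exp
  have hquot := (hexp y).mul ((hasDerivAt_inv (sum_exp_pos x).ne').comp_hasFDerivAt x
    (HasFDerivAt.fun_sum fun i _ => hexp i))
  rw [hasGradientAt_iff_hasFDerivAt]
  refine hquot.congr_fderiv ?_
  ext v
  simp only [InnerProductSpace.toDual_apply_apply, real_inner_smul_left, inner_sub_left,
    EuclideanSpace.inner_single_left]
  simp only [neg_smul, smul_neg, Function.comp_apply, add_apply, neg_apply, smul_apply, sum_apply,
    PiLp.proj_apply, smul_eq_mul, softmax, div_eq_mul_inv, ringHom_apply, one_mul, PiLp.inner_apply,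
    RCLike.inner_apply, mul_comm (v _)]
  simp only [mul_right_comm _ (∑ i, exp (x i))⁻¹, ← Finset.sum_mul]
  field_simp
  ring

end Softmax

/-- For any temperature `β > 0` and any index `y`, the ℓ2 norm of the gradient of
`x ↦ softmax(x/β)_y` is at most `1/(2√2 β)`. -/
theorem softmax_gradient_norm_le {K : ℕ} (β : ℝ) (hβ : 0 < β) (y : Fin K)
    (x : EuclideanSpace ℝ (Fin K)) :
    ‖gradient (fun z => softmax (β⁻¹ • z) y) x‖ ≤ 1 / (2 * Real.sqrt 2 * β) := by
  have : NeZero K := NeZero.of_pos y.pos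
  have hgrad := (hasGradientAt_softmax (β⁻¹ • x) y).comp_const_smul β⁻¹
  have hbound := EuclideanSpace.norm_smul_single_sub_le
    (p := WithLp.toLp 2 (softmax (β⁻¹ • x))) (softmax_nonneg (β⁻¹ • x)) (sum_softmax (β⁻¹ • x)) y
  rw [hgrad.gradient, norm_smul, norm_inv, norm_of_nonneg hβ.le]
  calc β⁻¹ * ‖_‖ ≤ β⁻¹ * (1 / (2 * √2)) :=
        mul_le_mul_of_nonneg_left hbound (by positivity)
    _ = 1 / (2 * √2 * β) := by field_simp
end

section
/- Let f_a : ℝ → [0,1] be the piecewise linear ramp f_a(s) = 0 for s ≤ a, L(s-a) for a ≤ s ≤ a + 1/L, and 1 for s ≥ a + 1/L. Then for any L > 0, the functional Ĝ(a) = ∫_{-∞}^{∞} (1/√(2π))e^{-s²/2} s f_a(s) ds satisfies Ĝ(0) ≤ Ĝ(a) for a ∈ (-1/L, 0), in particular Ĝ(-1/L) = Ĝ(0). -/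
open Real

/-- The piecewise linear ramp `f_a`: `0` for `s ≤ a`, `L(s-a)` for `a ≤ s ≤ a + 1/L`,
and `1` for `s ≥ a + 1/L`. -/
noncomputable def ramp (L a s : ℝ) : ℝ :=
  if s ≤ a then 0 else if s ≤ a + 1 / L then L * (s - a) else 1

/-- `Ĝ(a) = ∫ (1/√(2π)) e^{-s²/2} s f_a(s) ds`. -/
noncomputable def Ghat (L a : ℝ) : ℝ :=
  ∫ s : ℝ, (1 / Real.sqrt (2 * π)) * Real.exp (-s ^ 2 / 2) * s * ramp L a s

open MeasureTheory

lemma ramp_nonneg {L : ℝ} (hL : 0 < L) (a s : ℝ) : 0 ≤ ramp L a s := by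
  unfold ramp; split_ifs with h1 h2 <;> nlinarith

lemma ramp_le_one {L : ℝ} (hL : 0 < L) (a s : ℝ) : ramp L a s ≤ 1 := by
  have h1L : 0 < 1 / L := by positivity
  have : L * (1 / L) = 1 := by field_simp
  unfold ramp; split_ifs with h1 h2 <;> nlinarith

lemma measurable_ramp (L a : ℝ) : Measurable (ramp L a) := by
  unfold ramp
  exact Measurable.ite (measurableSet_le measurable_id measurable_const) measurable_const
    (Measurable.ite (measurableSet_le measurable_id measurable_const)
      (by fun_prop) measurable_const)

/-- Integrability of a gaussian-type integrand with bounded measurable weight. -/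
lemma integrable_gauss_wt {w : ℝ → ℝ} (hw : Measurable w) (hb : ∀ s, |w s| ≤ 1) :
    Integrable (fun s : ℝ =>
      (1 / Real.sqrt (2 * π)) * Real.exp (-s ^ 2 / 2) * s * w s) := by
  have hint : Integrable (fun s : ℝ => s * Real.exp (-(1/2 : ℝ) * s ^ 2)) :=
    integrable_mul_exp_neg_mul_sq (by norm_num)
  have hint2 : Integrable (fun s : ℝ =>
      (1 / Real.sqrt (2 * π)) * |s * Real.exp (-(1/2 : ℝ) * s ^ 2)|) :=
    (hint.abs.const_mul _)
  refine hint2.mono' ?_ ?_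
  · apply Measurable.aestronglyMeasurable
    fun_prop
  · filter_upwards with s
    have h1 : (0:ℝ) ≤ 1 / Real.sqrt (2 * π) := by positivity
    have h2 : Real.exp (-s ^ 2 / 2) = Real.exp (-(1/2 : ℝ) * s ^ 2) := by ring_nf
    rw [Real.norm_eq_abs, h2]
    have h3 : |1 / Real.sqrt (2 * π) * Real.exp (-(1/2:ℝ) * s ^ 2) * s * w s|
        = (1 / Real.sqrt (2 * π)) * |s * Real.exp (-(1/2:ℝ) * s ^ 2)| * |w s| := by
      rw [abs_mul, abs_mul, abs_mul, abs_of_nonneg h1,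
        abs_of_nonneg (Real.exp_pos _).le, abs_mul, abs_of_nonneg (Real.exp_pos _).le]
      ring
    rw [h3]
    have h4 := hb s
    nlinarith [abs_nonneg (s * Real.exp (-(1/2:ℝ) * s ^ 2)), abs_nonneg (w s),
      mul_nonneg h1 (abs_nonneg (s * Real.exp (-(1/2:ℝ) * s ^ 2)))]

lemma integrable_Ghat {L : ℝ} (hL : 0 < L) (a : ℝ) :
    Integrable (fun s : ℝ =>
      (1 / Real.sqrt (2 * π)) * Real.exp (-s ^ 2 / 2) * s * ramp L a s) := by
  apply integrable_gauss_wt (measurable_ramp L a)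
  intro s
  rw [abs_le]
  exact ⟨by linarith [ramp_nonneg hL a s], ramp_le_one hL a s⟩

lemma ramp_neg_eq {L : ℝ} (hL : 0 < L) (s : ℝ) :
    ramp L (-(1 / L)) s = 1 - ramp L 0 (-s) := by
  have h1L : 0 < 1 / L := by positivity
  have hinv : L * (1 / L) = 1 := by field_simp
  unfold ramp
  split_ifs <;> nlinarith

set_option maxHeartbeats 2000000 in
lemma key_half {L a : ℝ} (hL : 0 < L) (ha1 : -(1 / L) < a) (ha2 : a < 0) {s : ℝ}
    (hs : 0 ≤ s) :
    ramp L a (-s) - ramp L 0 (-s) ≤ ramp L a s - ramp L 0 s := by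
  have h1L : 0 < 1 / L := by positivity
  have hinv : L * (1 / L) = 1 := by field_simp
  unfold ramp
  split_ifs <;> nlinarith [mul_nonneg hL.le hs]

lemma key_ineq {L a : ℝ} (hL : 0 < L) (ha1 : -(1 / L) < a) (ha2 : a < 0) (s : ℝ) :
    0 ≤ s * ((ramp L a s - ramp L 0 s) - (ramp L a (-s) - ramp L 0 (-s))) := by
  rcases le_total 0 s with hs | hs
  · have h := key_half hL ha1 ha2 hs
    exact mul_nonneg hs (by linarith)
  · have h := key_half hL ha1 ha2 (neg_nonneg.2 hs)
    rw [neg_neg] at h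
    nlinarith [h]

/-- For any `L > 0`, `Ĝ(0) ≤ Ĝ(a)` for `a ∈ (-1/L, 0)`; in particular `Ĝ(-1/L) = Ĝ(0)`. -/
theorem ramp_functional_ineq (L : ℝ) (hL : 0 < L) :
    (∀ a ∈ Set.Ioo (-(1 / L)) (0:ℝ), Ghat L 0 ≤ Ghat L a) ∧
    Ghat L (-(1 / L)) = Ghat L 0 := by
  have hc0 : (0:ℝ) ≤ 1 / Real.sqrt (2 * π) := by positivity
  constructor
  · rintro a ⟨ha1, ha2⟩
    set G : ℝ → ℝ := fun s => 1 / Real.sqrt (2 * π) * Real.exp (-s ^ 2 / 2) * s * ramp L a s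
        - 1 / Real.sqrt (2 * π) * Real.exp (-s ^ 2 / 2) * s * ramp L 0 s with hG
    have hGa := integrable_Ghat hL a
    have hG0 := integrable_Ghat hL 0
    have hGint : Integrable G := hGa.sub hG0
    have hdiff : Ghat L a - Ghat L 0 = ∫ s : ℝ, G s := by
      rw [hG, integral_sub hGa hG0]; rfl
    have hneg : ∫ s : ℝ, G (-s) = ∫ s : ℝ, G s := integral_neg_eq_self G volume
    have hGnegint : Integrable (fun s => G (-s)) := hGint.comp_neg
    have hsum : 0 ≤ ∫ s : ℝ, (G s + G (-s)) := by
      refine integral_nonneg fun s => ?_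
      have hpt : G s + G (-s)
          = 1 / Real.sqrt (2 * π) * Real.exp (-s ^ 2 / 2) *
            (s * ((ramp L a s - ramp L 0 s) - (ramp L a (-s) - ramp L 0 (-s)))) := by
        simp only [hG, neg_neg, neg_sq]
        ring
      show (0:ℝ) ≤ G s + G (-s)
      rw [hpt]
      exact mul_nonneg (mul_nonneg hc0 (Real.exp_pos _).le) (key_ineq hL ha1 ha2 s)
    rw [integral_add hGint hGnegint, hneg] at hsum
    have h2 : 0 ≤ ∫ s : ℝ, G s := by linarith
    linarith [hdiff ▸ h2]
  · have hG0 := integrable_Ghat hL 0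
    have hG0n : Integrable (fun s : ℝ =>
        1 / Real.sqrt (2 * π) * Real.exp (-s ^ 2 / 2) * s * ramp L 0 (-s)) := by
      refine ((integrable_Ghat hL 0).comp_neg).neg.congr ?_
      filter_upwards with s
      simp only [Pi.neg_apply, neg_sq]
      ring
    have hodd : Integrable (fun s : ℝ => 1 / Real.sqrt (2 * π) * Real.exp (-s ^ 2 / 2) * s) := by
      refine (integrable_gauss_wt (w := fun _ => 1) measurable_const (by simp)).congr ?_
      filter_upwards with s
      ring
    have hoddzero : (∫ s : ℝ, 1 / Real.sqrt (2 * π) * Real.exp (-s ^ 2 / 2) * s) = 0 := by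
      have h := integral_neg_eq_self
        (fun s : ℝ => 1 / Real.sqrt (2 * π) * Real.exp (-s ^ 2 / 2) * s) volume
      simp only [neg_sq, mul_neg] at h
      rw [integral_neg] at h
      linarith
    have hswap : (∫ s : ℝ, 1 / Real.sqrt (2 * π) * Real.exp (-s ^ 2 / 2) * s * ramp L 0 (-s))
        = -(Ghat L 0) := by
      set F0 : ℝ → ℝ :=
        fun s => 1 / Real.sqrt (2 * π) * Real.exp (-s ^ 2 / 2) * s * ramp L 0 s with hF0
      have hkey : (∫ s : ℝ, F0 (-s)) = ∫ s : ℝ, F0 s := integral_neg_eq_self F0 volume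
      have h1 : (fun s : ℝ => 1 / Real.sqrt (2 * π) * Real.exp (-s ^ 2 / 2) * s * ramp L 0 (-s))
          = fun s : ℝ => -(F0 (-s)) := by
        funext s
        simp only [hF0, neg_sq]
        ring
      rw [h1, integral_neg, hkey]
      congr 1
    have hsplit : Ghat L (-(1 / L)) = ∫ s : ℝ, (1 / Real.sqrt (2 * π) * Real.exp (-s ^ 2 / 2) * s
        - 1 / Real.sqrt (2 * π) * Real.exp (-s ^ 2 / 2) * s * ramp L 0 (-s)) := by
      unfold Ghat
      congr 1
      funext s
      rw [ramp_neg_eq hL s]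
      ring
    rw [hsplit, integral_sub hodd hG0n, hoddzero, hswap]
    ring
end
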